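/- Let x : ℝ × [0,T) → ℝ² be a smooth family of curves, 1-periodic in u, with g = |∂_u x| > 0, arclength derivative ∂_s = (1/g)∂_u, unit tangent T = ∂_s x, unit normal N equal to T rotated by +π/2, and signed curvature k = ∂_s x ∧ ∂_s² x. Let α : ℝ × [0,T) → ℝ be smooth and 1-periodic in u. Then at every point, ∂_t x = (−∂_s² k − (1/2) k³) N + α T holds if and only if ∂_t x = −∂_s⁴ x − (3/2) ∂_s(k² ∂_s x) + α ∂_s x holds. -/

import Mathlib

/-- The arclength derivative `∂_s f = (1/g) ∂_u f` associated with a local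
length element `g`. -/
noncomputable def arcDeriv (g f : ℝ → ℝ) : ℝ → ℝ := fun u => deriv f u / g u

/-- The signed curvature `k = ∂_s x ∧ ∂_s² x` of a plane curve with
components `X₁, X₂` and local length element `g`. -/
noncomputable def signedCurv (g X₁ X₂ : ℝ → ℝ) : ℝ → ℝ :=
  fun u => arcDeriv g X₁ u * arcDeriv g (arcDeriv g X₂) u
    - arcDeriv g X₂ u * arcDeriv g (arcDeriv g X₁) u

/-!
With `T = ∂_s x`, `N = T` rotated by `+π/2` and `k` the signed curvature, the Frenet
equations `∂_s T = k N`, `∂_s N = -k T` give `∂_s³ T = (∂_s² k - k³) N - 3 k ∂_s k T` and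
`∂_s (k² T) = 2 k ∂_s k T + k³ N`. Hence `∂_s⁴ x + (3/2) ∂_s (k² ∂_s x) = (∂_s² k + k³/2) N`:
the tangential terms cancel, so the two evolution laws have the same right-hand side.
-/

section ArcDeriv

variable {G f h : ℝ → ℝ}

theorem ContDiff.arcDeriv (hf : ContDiff ℝ (⊤ : ℕ∞) f) (hG : ContDiff ℝ (⊤ : ℕ∞) G)
    (hG0 : ∀ v, G v ≠ 0) : ContDiff ℝ (⊤ : ℕ∞) (arcDeriv G f) :=
  ((contDiff_infty_iff_deriv.mp hf).2).div hG hG0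

theorem arcDeriv_neg (v : ℝ) : arcDeriv G (fun w => -f w) v = -arcDeriv G f v := by
  simp [arcDeriv, neg_div]

theorem arcDeriv_add {v : ℝ} (hf : DifferentiableAt ℝ f v) (hh : DifferentiableAt ℝ h v) :
    arcDeriv G (fun w => f w + h w) v = arcDeriv G f v + arcDeriv G h v := by
  simp only [arcDeriv, deriv_fun_add hf hh, add_div]

theorem arcDeriv_mul {v : ℝ} (hf : DifferentiableAt ℝ f v) (hh : DifferentiableAt ℝ h v) :
    arcDeriv G (fun w => f w * h w) v = arcDeriv G f v * h v + f v * arcDeriv G h v := by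
  simp only [arcDeriv, deriv_fun_mul hf hh]; ring

theorem arcDeriv_sq {v : ℝ} (hf : DifferentiableAt ℝ f v) :
    arcDeriv G (fun w => f w ^ 2) v = 2 * f v * arcDeriv G f v := by
  simp only [arcDeriv, deriv_fun_pow hf 2]; push_cast; ring

end ArcDeriv

section Frenet

variable {G T₁ T₂ K : ℝ → ℝ}

theorem mul_deriv_add_mul_deriv_eq_zero {v : ℝ} (hT₁ : DifferentiableAt ℝ T₁ v)
    (hT₂ : DifferentiableAt ℝ T₂ v) (hunit : ∀ w, T₁ w ^ 2 + T₂ w ^ 2 = 1) :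
    T₁ v * deriv T₁ v + T₂ v * deriv T₂ v = 0 := by
  have hderiv := (hT₁.hasDerivAt.fun_pow 2).fun_add (hT₂.hasDerivAt.fun_pow 2)
  rw [show (fun w => T₁ w ^ 2 + T₂ w ^ 2) = fun _ => 1 from funext hunit] at hderiv
  have hzero := (hasDerivAt_const v (1 : ℝ)).unique hderiv
  push_cast at hzero
  linear_combination -hzero / 2

/-- The Frenet equations `∂_s T = k N` for a unit vector field `T = (T₁, T₂)`, with
`k = T ∧ ∂_s T`. -/
theorem arcDeriv_eq_of_sq_add_sq_eq_one {v : ℝ} (hT₁ : DifferentiableAt ℝ T₁ v)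
    (hT₂ : DifferentiableAt ℝ T₂ v) (hunit : ∀ w, T₁ w ^ 2 + T₂ w ^ 2 = 1) :
    arcDeriv G T₁ v = -((T₁ v * arcDeriv G T₂ v - T₂ v * arcDeriv G T₁ v) * T₂ v) ∧
      arcDeriv G T₂ v = (T₁ v * arcDeriv G T₂ v - T₂ v * arcDeriv G T₁ v) * T₁ v := by
  have horth := mul_deriv_add_mul_deriv_eq_zero hT₁ hT₂ hunit
  simp only [arcDeriv]
  constructor
  · linear_combination (-(deriv T₁ v / G v)) * hunit v + T₁ v / G v * horth
  · linear_combination (-(deriv T₂ v / G v)) * hunit v + T₂ v / G v * horth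

theorem arcDeriv_three_add_of_frenet (hT₁ : Differentiable ℝ T₁) (hT₂ : Differentiable ℝ T₂)
    (hK : Differentiable ℝ K) (hK' : Differentiable ℝ (arcDeriv G K))
    (h₁ : ∀ v, arcDeriv G T₁ v = -(K v * T₂ v)) (h₂ : ∀ v, arcDeriv G T₂ v = K v * T₁ v)
    (u : ℝ) :
    arcDeriv G (arcDeriv G (arcDeriv G T₁)) u
        + (3 / 2 : ℝ) * arcDeriv G (fun v => K v ^ 2 * T₁ v) u
      = -((arcDeriv G (arcDeriv G K) u + K u ^ 3 / 2) * T₂ u) := by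
  have hsecond : arcDeriv G (arcDeriv G T₁)
      = fun v => -(arcDeriv G K v * T₂ v + K v * (K v * T₁ v)) := by
    funext v
    rw [show arcDeriv G T₁ = fun w => -(K w * T₂ w) from funext h₁, arcDeriv_neg,
      arcDeriv_mul (hK v) (hT₂ v), h₂]
  rw [hsecond, arcDeriv_neg,
    arcDeriv_add ((hK' u).fun_mul (hT₂ u)) ((hK u).fun_mul ((hK u).fun_mul (hT₁ u))),
    arcDeriv_mul (hK' u) (hT₂ u), arcDeriv_mul (hK u) ((hK u).fun_mul (hT₁ u)),
    arcDeriv_mul (hK u) (hT₁ u), arcDeriv_mul ((hK u).fun_pow 2) (hT₁ u), arcDeriv_sq (hK u),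
    h₁, h₂]
  ring

end Frenet

section Curve

variable {G X₁ X₂ : ℝ → ℝ}

theorem arcDeriv_sq_add_arcDeriv_sq {v : ℝ}
    (hG : G v = √(deriv X₁ v ^ 2 + deriv X₂ v ^ 2)) (hG0 : G v ≠ 0) :
    arcDeriv G X₁ v ^ 2 + arcDeriv G X₂ v ^ 2 = 1 := by
  have hGsq : G v ^ 2 = deriv X₁ v ^ 2 + deriv X₂ v ^ 2 := by
    rw [hG]; exact Real.sq_sqrt (by positivity)
  simp only [arcDeriv]
  field_simp
  linarith

theorem contDiff_of_eq_sqrt (hX₁ : ContDiff ℝ (⊤ : ℕ∞) X₁) (hX₂ : ContDiff ℝ (⊤ : ℕ∞) X₂)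
    (hG : ∀ v, G v = √(deriv X₁ v ^ 2 + deriv X₂ v ^ 2)) (hG0 : ∀ v, G v ≠ 0) :
    ContDiff ℝ (⊤ : ℕ∞) G := by
  rw [show G = _ from funext hG]
  refine ((((contDiff_infty_iff_deriv.mp hX₁).2).pow 2).add
    (((contDiff_infty_iff_deriv.mp hX₂).2).pow 2)).sqrt fun v hv => hG0 v ?_
  rw [hG v, hv, Real.sqrt_zero]

theorem arcDeriv_four_add_eq_normal (hX₁ : ContDiff ℝ (⊤ : ℕ∞) X₁)
    (hX₂ : ContDiff ℝ (⊤ : ℕ∞) X₂) (hG : ∀ v, G v = √(deriv X₁ v ^ 2 + deriv X₂ v ^ 2))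
    (hG0 : ∀ v, G v ≠ 0) (u : ℝ) :
    arcDeriv G (arcDeriv G (arcDeriv G (arcDeriv G X₁))) u
        + (3 / 2 : ℝ) * arcDeriv G (fun v => signedCurv G X₁ X₂ v ^ 2 * arcDeriv G X₁ v) u
      = -((arcDeriv G (arcDeriv G (signedCurv G X₁ X₂)) u + signedCurv G X₁ X₂ u ^ 3 / 2)
          * arcDeriv G X₂ u) ∧
    arcDeriv G (arcDeriv G (arcDeriv G (arcDeriv G X₂))) u
        + (3 / 2 : ℝ) * arcDeriv G (fun v => signedCurv G X₁ X₂ v ^ 2 * arcDeriv G X₂ v) u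
      = (arcDeriv G (arcDeriv G (signedCurv G X₁ X₂)) u + signedCurv G X₁ X₂ u ^ 3 / 2)
          * arcDeriv G X₁ u := by
  have hGs := contDiff_of_eq_sqrt hX₁ hX₂ hG hG0
  have hT₁ := hX₁.arcDeriv hGs hG0
  have hT₂ := hX₂.arcDeriv hGs hG0
  have hK : ContDiff ℝ (⊤ : ℕ∞) (signedCurv G X₁ X₂) :=
    (hT₁.mul (hT₂.arcDeriv hGs hG0)).sub (hT₂.mul (hT₁.arcDeriv hGs hG0))
  have hdiff {f : ℝ → ℝ} (hf : ContDiff ℝ (⊤ : ℕ∞) f) : Differentiable ℝ f :=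
    hf.differentiable (by simp)
  have hfrenet : ∀ v, arcDeriv G (arcDeriv G X₁) v = -(signedCurv G X₁ X₂ v * arcDeriv G X₂ v) ∧
      arcDeriv G (arcDeriv G X₂) v = signedCurv G X₁ X₂ v * arcDeriv G X₁ v := fun v =>
    arcDeriv_eq_of_sq_add_sq_eq_one (hdiff hT₁ v) (hdiff hT₂ v)
      fun w => arcDeriv_sq_add_arcDeriv_sq (hG w) (hG0 w)
  have hK' := hdiff (hK.arcDeriv hGs hG0)
  constructor
  · exact arcDeriv_three_add_of_frenet (hdiff hT₁) (hdiff hT₂) (hdiff hK) hK'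
      (fun v => (hfrenet v).1) (fun v => (hfrenet v).2) u
  -- `(T₂, -T₁)` satisfies the same Frenet system as `(T₁, T₂)`.
  · refine arcDeriv_three_add_of_frenet (T₂ := fun v => -arcDeriv G X₁ v) (hdiff hT₂)
      (hdiff hT₁).neg (hdiff hK) hK' (fun v => ?_) (fun v => ?_) u |>.trans (by ring)
    · rw [(hfrenet v).2]; ring
    · rw [arcDeriv_neg, (hfrenet v).1]; ring

end Curve

theorem willmore_position_equation_equivalence_general
    (x₁ x₂ α : ℝ → ℝ → ℝ)
    (hx₁ : ContDiff ℝ (⊤ : ℕ∞) (Function.uncurry x₁))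
    (hx₂ : ContDiff ℝ (⊤ : ℕ∞) (Function.uncurry x₂))
    (g : ℝ → ℝ → ℝ)
    (hgdef : ∀ u t, g u t =
      Real.sqrt ((deriv (fun v => x₁ v t) u) ^ 2 + (deriv (fun v => x₂ v t) u) ^ 2))
    (hgpos : ∀ u t, 0 < g u t)
    (u t : ℝ)
    (G X₁ X₂ K : ℝ → ℝ)
    (hG : G = fun v => g v t) (hX₁ : X₁ = fun v => x₁ v t) (hX₂ : X₂ = fun v => x₂ v t)
    (hK : K = signedCurv G X₁ X₂)
    (β : ℝ)
    (hβ : β = -(arcDeriv G (arcDeriv G K) u) - (1 / 2 : ℝ) * (K u) ^ 3) :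
    (deriv (fun τ => x₁ u τ) t = β * (-(arcDeriv G X₂ u)) + α u t * arcDeriv G X₁ u ∧
     deriv (fun τ => x₂ u τ) t = β * (arcDeriv G X₁ u) + α u t * arcDeriv G X₂ u) ↔
    (deriv (fun τ => x₁ u τ) t =
        -(arcDeriv G (arcDeriv G (arcDeriv G (arcDeriv G X₁))) u)
          - (3 / 2 : ℝ) * arcDeriv G (fun v => (K v) ^ 2 * arcDeriv G X₁ v) u
          + α u t * arcDeriv G X₁ u ∧
     deriv (fun τ => x₂ u τ) t =
        -(arcDeriv G (arcDeriv G (arcDeriv G (arcDeriv G X₂))) u)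
          - (3 / 2 : ℝ) * arcDeriv G (fun v => (K v) ^ 2 * arcDeriv G X₂ v) u
          + α u t * arcDeriv G X₂ u) := by
  have hslice {y : ℝ → ℝ → ℝ} (hy : ContDiff ℝ (⊤ : ℕ∞) (Function.uncurry y)) :
      ContDiff ℝ (⊤ : ℕ∞) fun v => y v t :=
    hy.comp (contDiff_prodMk_left t)
  have hX₁s : ContDiff ℝ (⊤ : ℕ∞) X₁ := hX₁ ▸ hslice hx₁
  have hX₂s : ContDiff ℝ (⊤ : ℕ∞) X₂ := hX₂ ▸ hslice hx₂
  have hGsqrt : ∀ v, G v = √(deriv X₁ v ^ 2 + deriv X₂ v ^ 2) := by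
    subst hG hX₁ hX₂; exact fun v => hgdef v t
  have hG0 : ∀ v, G v ≠ 0 := by subst hG; exact fun v => (hgpos v t).ne'
  obtain ⟨e₁, e₂⟩ := arcDeriv_four_add_eq_normal hX₁s hX₂s hGsqrt hG0 u
  subst hK hβ
  refine and_congr (Eq.congr_right ?_) (Eq.congr_right ?_)
  · linear_combination e₁
  · linear_combination e₂

/-- For a smooth family of plane curves `x = (x₁, x₂)`, 1-periodic in `u`, with
local length element `g = |∂_u x| > 0`, arclength derivative `∂_s = (1/g)∂_u`,
unit tangent `T = ∂_s x`, unit normal `N = T` rotated by `+π/2`, signed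
curvature `k = ∂_s x ∧ ∂_s² x`, and smooth 1-periodic tangential velocity `α`,
at every point the equation `∂_t x = (−∂_s²k − (1/2)k³) N + α T` holds if and
only if `∂_t x = −∂_s⁴ x − (3/2) ∂_s(k² ∂_s x) + α ∂_s x` holds. -/
theorem willmore_position_equation_equivalence
    (T : ℝ) (hT : 0 < T) (x₁ x₂ α : ℝ → ℝ → ℝ)
    (hx₁ : ContDiff ℝ (⊤ : ℕ∞) (Function.uncurry x₁))
    (hx₂ : ContDiff ℝ (⊤ : ℕ∞) (Function.uncurry x₂))
    (hα : ContDiff ℝ (⊤ : ℕ∞) (Function.uncurry α))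
    (hx₁per : ∀ t, Function.Periodic (fun u => x₁ u t) 1)
    (hx₂per : ∀ t, Function.Periodic (fun u => x₂ u t) 1)
    (hαper : ∀ t, Function.Periodic (fun u => α u t) 1)
    (g : ℝ → ℝ → ℝ)
    (hgdef : ∀ u t, g u t =
      Real.sqrt ((deriv (fun v => x₁ v t) u) ^ 2 + (deriv (fun v => x₂ v t) u) ^ 2))
    (hgpos : ∀ u t, 0 < g u t)
    (u t : ℝ) (ht : t ∈ Set.Ico (0:ℝ) T)
    (G X₁ X₂ K : ℝ → ℝ)
    (hG : G = fun v => g v t) (hX₁ : X₁ = fun v => x₁ v t) (hX₂ : X₂ = fun v => x₂ v t)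
    (hK : K = signedCurv G X₁ X₂)
    (β : ℝ)
    (hβ : β = -(arcDeriv G (arcDeriv G K) u) - (1 / 2 : ℝ) * (K u) ^ 3) :
    (deriv (fun τ => x₁ u τ) t = β * (-(arcDeriv G X₂ u)) + α u t * arcDeriv G X₁ u ∧
     deriv (fun τ => x₂ u τ) t = β * (arcDeriv G X₁ u) + α u t * arcDeriv G X₂ u) ↔
    (deriv (fun τ => x₁ u τ) t =
        -(arcDeriv G (arcDeriv G (arcDeriv G (arcDeriv G X₁))) u)
          - (3 / 2 : ℝ) * arcDeriv G (fun v => (K v) ^ 2 * arcDeriv G X₁ v) u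
          + α u t * arcDeriv G X₁ u ∧
     deriv (fun τ => x₂ u τ) t =
        -(arcDeriv G (arcDeriv G (arcDeriv G (arcDeriv G X₂))) u)
          - (3 / 2 : ℝ) * arcDeriv G (fun v => (K v) ^ 2 * arcDeriv G X₂ v) u
          + α u t * arcDeriv G X₂ u) :=
  willmore_position_equation_equivalence_general x₁ x₂ α hx₁ hx₂ g hgdef hgpos u t G X₁ X₂ K hG hX₁
    hX₂ hK β hβ
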